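/- Let M be a perfect matching of G (n even). Then c(E(P*) ∖ M) ≥ w(P*) − (4/3)·w(M), where E(P*) ∖ M is the set of edges of 3-paths of P* that do not lie in M. -/
import Mathlib


open Finset
open scoped Classical

namespace MW3PP

/-- A 3-path `xyz`: a path on three distinct vertices with middle vertex `y`. -/
structure P3 (V : Type*) where
  x : V
  y : V
  z : V
  hxy : x ≠ y
  hyz : y ≠ z
  hxz : x ≠ z

variable {V : Type*} [Fintype V] [DecidableEq V]

/-- The vertex set of a 3-path. -/
def P3.verts (p : P3 V) : Finset V := {p.x, p.y, p.z}

/-- The two edges of a 3-path. -/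
def P3.edges (p : P3 V) : Finset (Sym2 V) := {s(p.x, p.y), s(p.y, p.z)}

/-- The weight of a 3-path. -/
def P3.wt (w : Sym2 V → ℝ) (p : P3 V) : ℝ := w s(p.x, p.y) + w s(p.y, p.z)

/-- The total weight of a set of edges. -/
def ew (w : Sym2 V → ℝ) (F : Finset (Sym2 V)) : ℝ := ∑ e ∈ F, w e

/-- The total weight of a set of 3-paths. -/
def pw (w : Sym2 V → ℝ) (P : Finset (P3 V)) : ℝ := ∑ p ∈ P, p.wt w

/-- `∑_{xyz ∈ S} max (w (xy)) (w (yz))`. -/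
def maxSum (w : Sym2 V → ℝ) (S : Finset (P3 V)) : ℝ :=
  ∑ p ∈ S, max (w s(p.x, p.y)) (w s(p.y, p.z))

/-- A perfect 3-path packing: `n/3` pairwise vertex-disjoint 3-paths covering all vertices. -/
def IsPacking (P : Finset (P3 V)) : Prop :=
  P.card = Fintype.card V / 3 ∧
  (∀ p ∈ P, ∀ q ∈ P, p ≠ q → Disjoint p.verts q.verts) ∧
  (∀ v : V, ∃ p ∈ P, v ∈ p.verts)

/-- A maximum-weight perfect 3-path packing. -/
def IsMaxPacking (w : Sym2 V → ℝ) (P : Finset (P3 V)) : Prop :=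
  IsPacking P ∧ ∀ Q : Finset (P3 V), IsPacking Q → pw w Q ≤ pw w P

/-- A matching: a set of pairwise vertex-disjoint (non-loop) edges. -/
def IsMatching (M : Finset (Sym2 V)) : Prop :=
  (∀ e ∈ M, ¬ e.IsDiag) ∧
  ∀ e ∈ M, ∀ f ∈ M, e ≠ f → ∀ v : V, v ∈ e → v ∉ f

/-- A maximum-weight matching among all matchings of size `k`. -/
def IsMaxMatchingOfSize (w : Sym2 V → ℝ) (k : ℕ) (M : Finset (Sym2 V)) : Prop :=
  IsMatching M ∧ M.card = k ∧
  ∀ M' : Finset (Sym2 V), IsMatching M' → M'.card = k → ew w M' ≤ ew w M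

/-- `v ∈ V(M)` : vertex `v` is covered by the matching `M`. -/
def covered (M : Finset (Sym2 V)) (v : V) : Prop := ∃ e ∈ M, v ∈ e

/-- `e_u` : the edge of `M` containing `u` (junk value if there is none). -/
noncomputable def eMatch (M : Finset (Sym2 V)) (u : V) : Sym2 V :=
  if h : ∃ e ∈ M, u ∈ e then h.choose else s(u, u)

/-- The cost `c` of an edge with respect to a matching `M`:
`c(uv) = w(uv) - min (w (e_u)) (w (e_v))` if both endpoints are covered by `M`,
and `c(uv) = w(uv)` otherwise. -/
noncomputable def cost (w : Sym2 V → ℝ) (M : Finset (Sym2 V)) : Sym2 V → ℝ :=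
  Sym2.lift ⟨fun u v =>
    if covered M u ∧ covered M v then
      w s(u, v) - min (w (eMatch M u)) (w (eMatch M v))
    else w s(u, v), by
      intro u v
      dsimp only
      by_cases h : covered M u ∧ covered M v
      · rw [if_pos h, if_pos (show covered M v ∧ covered M u from ⟨h.2, h.1⟩),
          Sym2.eq_swap, min_comm]
      · rw [if_neg h, if_neg (show ¬(covered M v ∧ covered M u) from fun h' => h ⟨h'.2, h'.1⟩),
          Sym2.eq_swap]⟩

/-- The total cost of a set of edges. -/
noncomputable def cw (w : Sym2 V → ℝ) (M F : Finset (Sym2 V)) : ℝ := ∑ e ∈ F, cost w M e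

/-- The number of vertices of the 3-path `p` covered by `M`. -/
noncomputable def kcnt (M : Finset (Sym2 V)) (p : P3 V) : ℕ :=
  (p.verts.filter fun v => covered M v).card

/-- Exactly one of the two edges of `p` lies in `M`. -/
def exOne (M : Finset (Sym2 V)) (p : P3 V) : Prop :=
  (s(p.x, p.y) ∈ M ∧ s(p.y, p.z) ∉ M) ∨ (s(p.x, p.y) ∉ M ∧ s(p.y, p.z) ∈ M)

def cls1 (M : Finset (Sym2 V)) (p : P3 V) : Prop := kcnt M p = 0
def cls2 (M : Finset (Sym2 V)) (p : P3 V) : Prop := kcnt M p = 1 ∧ ¬ covered M p.y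
def cls3 (M : Finset (Sym2 V)) (p : P3 V) : Prop := kcnt M p = 1 ∧ covered M p.y
def cls4 (M : Finset (Sym2 V)) (p : P3 V) : Prop := kcnt M p = 2 ∧ ¬ covered M p.y
def cls5 (M : Finset (Sym2 V)) (p : P3 V) : Prop := kcnt M p = 2 ∧ covered M p.y ∧ exOne M p
def cls6 (M : Finset (Sym2 V)) (p : P3 V) : Prop :=
  kcnt M p = 2 ∧ covered M p.y ∧ s(p.x, p.y) ∉ M ∧ s(p.y, p.z) ∉ M
def cls7 (M : Finset (Sym2 V)) (p : P3 V) : Prop := kcnt M p = 3 ∧ exOne M p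
def cls8 (M : Finset (Sym2 V)) (p : P3 V) : Prop :=
  kcnt M p = 3 ∧ s(p.x, p.y) ∉ M ∧ s(p.y, p.z) ∉ M

/-- The subset of a set of 3-paths satisfying a predicate. -/
noncomputable def psel (P : Finset (P3 V)) (c : P3 V → Prop) : Finset (P3 V) := P.filter c

/-- The set of all edges of the 3-paths in `S`. -/
def Esub (S : Finset (P3 V)) : Finset (Sym2 V) := S.biUnion P3.edges

/-- The heaviest edge of a 3-path (the edge `xy` in case of a tie). -/
noncomputable def heavy (w : Sym2 V → ℝ) (p : P3 V) : Sym2 V :=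
  if w s(p.y, p.z) ≤ w s(p.x, p.y) then s(p.x, p.y) else s(p.y, p.z)

noncomputable def X1 (w : Sym2 V → ℝ) (P : Finset (P3 V)) (M : Finset (Sym2 V)) :
    Finset (Sym2 V) := (psel P (cls1 M)).image (heavy w)
noncomputable def X2 (P : Finset (P3 V)) (M : Finset (Sym2 V)) : Finset (Sym2 V) :=
  (psel P (cls2 M)).image fun p => if covered M p.x then s(p.x, p.y) else s(p.y, p.z)
noncomputable def X3 (w : Sym2 V → ℝ) (P : Finset (P3 V)) (M : Finset (Sym2 V)) :
    Finset (Sym2 V) := (psel P (cls3 M)).image (heavy w)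
noncomputable def X4 (w : Sym2 V → ℝ) (P : Finset (P3 V)) (M : Finset (Sym2 V)) :
    Finset (Sym2 V) := (psel P (cls4 M)).image (heavy w)
noncomputable def X5 (P : Finset (P3 V)) (M : Finset (Sym2 V)) : Finset (Sym2 V) :=
  (psel P (cls5 M)).image fun p => if s(p.x, p.y) ∈ M then s(p.y, p.z) else s(p.x, p.y)
noncomputable def X6 (P : Finset (P3 V)) (M : Finset (Sym2 V)) : Finset (Sym2 V) :=
  (psel P (cls6 M)).image fun p => if covered M p.x then s(p.y, p.z) else s(p.x, p.y)
noncomputable def X7 (P : Finset (P3 V)) (M : Finset (Sym2 V)) : Finset (Sym2 V) :=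
  (psel P (cls7 M)).image fun p => if s(p.x, p.y) ∈ M then s(p.y, p.z) else s(p.x, p.y)
noncomputable def X8 (w : Sym2 V → ℝ) (P : Finset (P3 V)) (M : Finset (Sym2 V)) :
    Finset (Sym2 V) := (psel P (cls8 M)).image (heavy w)

noncomputable def Y1 (w : Sym2 V → ℝ) (P : Finset (P3 V)) (M : Finset (Sym2 V)) :
    Finset (Sym2 V) := Esub (psel P (cls1 M)) \ X1 w P M
noncomputable def Y2 (P : Finset (P3 V)) (M : Finset (Sym2 V)) : Finset (Sym2 V) :=
  Esub (psel P (cls2 M)) \ X2 P M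
noncomputable def Y3 (w : Sym2 V → ℝ) (P : Finset (P3 V)) (M : Finset (Sym2 V)) :
    Finset (Sym2 V) := Esub (psel P (cls3 M)) \ X3 w P M
noncomputable def Y4 (w : Sym2 V → ℝ) (P : Finset (P3 V)) (M : Finset (Sym2 V)) :
    Finset (Sym2 V) := Esub (psel P (cls4 M)) \ X4 w P M
noncomputable def Y5 (P : Finset (P3 V)) (M : Finset (Sym2 V)) : Finset (Sym2 V) :=
  Esub (psel P (cls5 M)) \ X5 P M
noncomputable def Y6 (P : Finset (P3 V)) (M : Finset (Sym2 V)) : Finset (Sym2 V) :=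
  Esub (psel P (cls6 M)) \ X6 P M
noncomputable def Y7 (P : Finset (P3 V)) (M : Finset (Sym2 V)) : Finset (Sym2 V) :=
  Esub (psel P (cls7 M)) \ X7 P M
noncomputable def Y8 (w : Sym2 V → ℝ) (P : Finset (P3 V)) (M : Finset (Sym2 V)) :
    Finset (Sym2 V) := Esub (psel P (cls8 M)) \ X8 w P M

/-- An edge is a middle edge (w.r.t. `M`) if exactly one of its endpoints lies in `V(M)`. -/
def isMiddle (M : Finset (Sym2 V)) (e : Sym2 V) : Prop :=
  ∃ u v : V, e = s(u, v) ∧ covered M u ∧ ¬ covered M v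

/-- Two edges share a vertex. -/
def shares (e f : Sym2 V) : Prop := ∃ v, v ∈ e ∧ v ∈ f

/-- `g` is a middle edge of some 3-path in `S`. -/
def middleIn (M : Finset (Sym2 V)) (S : Finset (P3 V)) (g : Sym2 V) : Prop :=
  (∃ p ∈ S, g ∈ p.edges) ∧ isMiddle M g

/-- The 3-paths of `P` lying in classes 2, 3 or 4. -/
noncomputable def P234 (P : Finset (P3 V)) (M : Finset (Sym2 V)) : Finset (P3 V) :=
  psel P fun p => cls2 M p ∨ cls3 M p ∨ cls4 M p

/-- `M_1`: edges of `M` sharing a vertex with at least one middle edge of a 3-path of `P*_6`. -/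
noncomputable def Mset1 (P : Finset (P3 V)) (M : Finset (Sym2 V)) : Finset (Sym2 V) :=
  M.filter fun f => ∃ g, middleIn M (psel P (cls6 M)) g ∧ shares f g

/-- `M_2`: edges of `M` sharing a vertex with at least one middle edge, all middle edges met
belonging to 3-paths of `P*_2 ∪ P*_3 ∪ P*_4`. -/
noncomputable def Mset2 (P : Finset (P3 V)) (M : Finset (Sym2 V)) : Finset (Sym2 V) :=
  M.filter fun f =>
    (∃ g, middleIn M P g ∧ shares f g) ∧
    ∀ g, middleIn M P g → shares f g → middleIn M (P234 P M) g

/-- `M_3 = M ∩ E(P*_7)`. -/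
noncomputable def Mset3 (P : Finset (P3 V)) (M : Finset (Sym2 V)) : Finset (Sym2 V) :=
  M ∩ Esub (psel P (cls7 M))

/-- `M_4 = M ∩ E(P*_5)`. -/
noncomputable def Mset4 (P : Finset (P3 V)) (M : Finset (Sym2 V)) : Finset (Sym2 V) :=
  M ∩ Esub (psel P (cls5 M))

/-- The middle edges of 3-paths of `P*_6`. -/
noncomputable def mid6 (P : Finset (P3 V)) (M : Finset (Sym2 V)) : Finset (Sym2 V) :=
  (Esub (psel P (cls6 M))).filter (isMiddle M)

/-- `M'_1`: edges of `M_1` meeting exactly one middle edge of a 3-path of `P*_6` and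
no middle edge of a 3-path of `P*_2 ∪ P*_3 ∪ P*_4`. -/
noncomputable def Mset1' (P : Finset (P3 V)) (M : Finset (Sym2 V)) : Finset (Sym2 V) :=
  (Mset1 P M).filter fun f =>
    ((mid6 P M).filter fun g => shares f g).card = 1 ∧
    ∀ g, middleIn M (P234 P M) g → ¬ shares f g

/-- `M''_1`: edges of `M_1` meeting two middle edges of 3-paths of `P*_6`. -/
noncomputable def Mset1'' (P : Finset (P3 V)) (M : Finset (Sym2 V)) : Finset (Sym2 V) :=
  (Mset1 P M).filter fun f => ((mid6 P M).filter fun g => shares f g).card = 2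

/-- `M'''_1`: edges of `M_1` meeting exactly one middle edge of a 3-path of `P*_6` and
at least one middle edge of a 3-path of `P*_2 ∪ P*_3 ∪ P*_4`. -/
noncomputable def Mset1''' (P : Finset (P3 V)) (M : Finset (Sym2 V)) : Finset (Sym2 V) :=
  (Mset1 P M).filter fun f =>
    ((mid6 P M).filter fun g => shares f g).card = 1 ∧
    ∃ g, middleIn M (P234 P M) g ∧ shares f g

/-- Assumption on `P*`: for every 3-path `xyz ∈ P*` with `y ∉ V(M)` and `x, z ∈ V(M)`,
the vertices `x` and `z` lie in two distinct edges of `M`. -/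
def Ass (P : Finset (P3 V)) (M : Finset (Sym2 V)) : Prop :=
  ∀ p ∈ P, ¬ covered M p.y → covered M p.x → covered M p.z →
    ∃ e ∈ M, ∃ f ∈ M, p.x ∈ e ∧ p.z ∈ f ∧ e ≠ f

/-- An admissible edge w.r.t. `M`: either both endpoints are in `V(M)` and lie in two distinct
edges of `M`, or exactly one endpoint is in `V(M)`. -/
def goodEdge (M : Finset (Sym2 V)) (e : Sym2 V) : Prop :=
  (∃ u v : V, e = s(u, v) ∧ covered M u ∧ covered M v ∧ ∀ f ∈ M, ¬(u ∈ f ∧ v ∈ f)) ∨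
  (∃ u v : V, e = s(u, v) ∧ covered M u ∧ ¬ covered M v)


lemma eMatch_mem {M : Finset (Sym2 V)} {u : V} (h : covered M u) :
    eMatch M u ∈ M ∧ u ∈ eMatch M u := by
  have h' : ∃ e, e ∈ M ∧ u ∈ e := h
  rw [eMatch, dif_pos h']
  exact ⟨h'.choose_spec.1, h'.choose_spec.2⟩

lemma eMatch_eq {M : Finset (Sym2 V)} (hM : IsMatching M) {u : V} {f : Sym2 V}
    (hf : f ∈ M) (hu : u ∈ f) : eMatch M u = f := by
  have hc : covered M u := ⟨f, hf, hu⟩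
  obtain ⟨h1, h2⟩ := eMatch_mem hc
  by_contra hne
  exact hM.2 _ h1 _ hf hne u h2 hu

lemma cost_eq (w : Sym2 V → ℝ) {M : Finset (Sym2 V)} (u v : V)
    (hu : covered M u) (hv : covered M v) :
    cost w M s(u, v) = w s(u, v) - min (w (eMatch M u)) (w (eMatch M v)) := by
  rw [cost, Sym2.lift_mk]
  exact if_pos ⟨hu, hv⟩

lemma endpoints_card {f : Sym2 V} (hf : ¬ f.IsDiag) :
    (univ.filter (· ∈ f)).card = 2 := by
  induction f using Sym2.ind with
  | _ a b =>
    have hab : a ≠ b := by simpa using hf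
    have h : univ.filter (· ∈ s(a, b)) = {a, b} := by
      ext v; simp [Sym2.mem_iff]
    rw [h, card_pair hab]

lemma all_covered {n : ℕ} (hn : Fintype.card V = n) (h2 : 2 ∣ n)
    {M : Finset (Sym2 V)} (hM : IsMatching M) (hMcard : M.card = n / 2) (v : V) :
    covered M v := by
  have hdisj : ∀ e ∈ M, ∀ f ∈ M, e ≠ f →
      Disjoint (univ.filter (· ∈ e)) (univ.filter (· ∈ f)) := by
    intro e he f hf hef
    simp only [Finset.disjoint_left, mem_filter]
    rintro x ⟨-, hx⟩ ⟨-, hx'⟩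
    exact hM.2 e he f hf hef x hx hx'
  have hcard : (M.biUnion fun e => univ.filter (· ∈ e)).card = n := by
    rw [Finset.card_biUnion hdisj,
      Finset.sum_congr rfl (fun e he => endpoints_card (hM.1 e he)),
      Finset.sum_const, smul_eq_mul, hMcard, Nat.div_mul_cancel h2]
  have huniv : (M.biUnion fun e => univ.filter (· ∈ e)) = univ :=
    Finset.eq_univ_of_card _ (hcard.trans hn.symm)
  have hv : v ∈ M.biUnion fun e => univ.filter (· ∈ e) := by rw [huniv]; exact mem_univ v
  obtain ⟨e, he, hve⟩ := Finset.mem_biUnion.mp hv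
  exact ⟨e, he, (mem_filter.mp hve).2⟩

lemma sum_eMatch (w : Sym2 V → ℝ) {M : Finset (Sym2 V)} (hM : IsMatching M)
    (hcov : ∀ v : V, covered M v) :
    ∑ v : V, w (eMatch M v) = 2 * ew w M := by
  have hmaps : ∀ v ∈ (univ : Finset V), eMatch M v ∈ M :=
    fun v _ => (eMatch_mem (hcov v)).1
  rw [← Finset.sum_fiberwise_of_maps_to hmaps (fun v => w (eMatch M v)), ew,
    Finset.mul_sum]
  refine Finset.sum_congr rfl fun f hf => ?_
  have hfib : univ.filter (fun v => eMatch M v = f) = univ.filter (· ∈ f) := by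
    ext v
    simp only [mem_filter, mem_univ, true_and]
    constructor
    · rintro rfl; exact (eMatch_mem (hcov v)).2
    · intro hvf; exact eMatch_eq hM hf hvf
  rw [Finset.sum_congr rfl (fun v hv => by
      rw [(Finset.mem_filter.mp hv).2] : ∀ v ∈ univ.filter (fun v => eMatch M v = f),
        w (eMatch M v) = w f),
    Finset.sum_const, hfib, endpoints_card (hM.1 f hf)]
  ring

lemma edges_ne (p : P3 V) : s(p.x, p.y) ≠ s(p.y, p.z) := by
  intro h
  rw [Sym2.eq_iff] at h
  rcases h with ⟨h1, -⟩ | ⟨h1, -⟩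
  · exact p.hxy h1
  · exact p.hxz h1

lemma y_mem_edges {p : P3 V} {e : Sym2 V} (he : e ∈ p.edges) : p.y ∈ e := by
  rw [P3.edges, mem_insert, mem_singleton] at he
  rcases he with rfl | rfl <;> simp [Sym2.mem_iff]

lemma mem_verts_of_mem_edges {p : P3 V} {e : Sym2 V} (he : e ∈ p.edges) {v : V}
    (hv : v ∈ e) : v ∈ p.verts := by
  rw [P3.edges, mem_insert, mem_singleton] at he
  rcases he with rfl | rfl <;> rw [Sym2.mem_iff] at hv <;>
    rcases hv with rfl | rfl <;> simp [P3.verts]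

lemma edges_disjoint {P : Finset (P3 V)}
    (hdis : ∀ p ∈ P, ∀ q ∈ P, p ≠ q → Disjoint p.verts q.verts) :
    (↑P : Set (P3 V)).PairwiseDisjoint P3.edges := by
  intro p hp q hq hpq
  simp only [Function.onFun, Finset.disjoint_left]
  intro e hep heq
  have h1 : p.y ∈ p.verts := by simp [P3.verts]
  have h2 : p.y ∈ q.verts := mem_verts_of_mem_edges heq (y_mem_edges hep)
  exact (Finset.disjoint_left.mp (hdis p hp q hq hpq)) h1 h2

theorem statement_2 (n : ℕ) (hn : Fintype.card V = n) (h3 : 3 ∣ n) (h2 : 2 ∣ n)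
    (w : Sym2 V → ℝ) (hw : ∀ e : Sym2 V, 0 ≤ w e)
    (Pstar : Finset (P3 V)) (hP : IsMaxPacking w Pstar)
    (M : Finset (Sym2 V)) (hM : IsMatching M) (hMcard : M.card = n / 2) :
    pw w Pstar - (4 / 3 : ℝ) * ew w M ≤ cw w M (Esub Pstar \ M) := by
  obtain ⟨⟨hPcard, hPdis, hPcov⟩, -⟩ := hP
  have hcov : ∀ v : V, covered M v := all_covered hn h2 hM hMcard
  set g : Sym2 V → ℝ := fun e => if e ∉ M then cost w M e else 0 with hg
  have hcw : cw w M (Esub Pstar \ M) = ∑ e ∈ Esub Pstar, g e := by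
    rw [cw, Finset.sdiff_eq_filter, Finset.sum_filter]
  have hsplit : ∑ e ∈ Esub Pstar, g e = ∑ p ∈ Pstar, ∑ e ∈ p.edges, g e := by
    rw [Esub, Finset.sum_biUnion (edges_disjoint hPdis)]
  have hpath : ∀ p ∈ Pstar,
      p.wt w - (2 / 3 : ℝ) * ∑ v ∈ p.verts, w (eMatch M v) ≤ ∑ e ∈ p.edges, g e := by
    intro p _
    have hvs : ∑ v ∈ p.verts, w (eMatch M v)
        = w (eMatch M p.x) + w (eMatch M p.y) + w (eMatch M p.z) := by
      rw [P3.verts, Finset.sum_insert (by simp [p.hxy, p.hxz]),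
        Finset.sum_insert (by simp [p.hyz]), Finset.sum_singleton]
      ring
    have hes : ∑ e ∈ p.edges, g e = g s(p.x, p.y) + g s(p.y, p.z) := by
      rw [P3.edges, Finset.sum_pair (edges_ne p)]
    have hcx := cost_eq w p.x p.y (hcov p.x) (hcov p.y)
    have hcy := cost_eq w p.y p.z (hcov p.y) (hcov p.z)
    rw [hvs, hes, P3.wt]
    by_cases h1 : s(p.x, p.y) ∈ M
    · have hxx : eMatch M p.x = s(p.x, p.y) := eMatch_eq hM h1 (by simp)
      have hyy : eMatch M p.y = s(p.x, p.y) := eMatch_eq hM h1 (by simp)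
      have h2 : s(p.y, p.z) ∉ M := by
        intro h2
        have h3 := eMatch_eq hM h2 (by simp : p.y ∈ s(p.y, p.z))
        rw [hyy] at h3
        exact edges_ne p h3
      simp only [hg, if_neg (not_not_intro h1), if_pos h2]
      rw [hcy, hyy, hxx]
      rcases min_cases (w s(p.x, p.y)) (w (eMatch M p.z)) with ⟨hm, hle⟩ | ⟨hm, hle⟩ <;>
        rw [hm] <;> linarith
    · by_cases h2 : s(p.y, p.z) ∈ M
      · have hyy : eMatch M p.y = s(p.y, p.z) := eMatch_eq hM h2 (by simp)
        have hzz : eMatch M p.z = s(p.y, p.z) := eMatch_eq hM h2 (by simp)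
        simp only [hg, if_pos h1, if_neg (not_not_intro h2)]
        rw [hcx, hyy, hzz]
        rcases min_cases (w (eMatch M p.x)) (w s(p.y, p.z)) with ⟨hm, hle⟩ | ⟨hm, hle⟩ <;>
          rw [hm] <;> linarith
      · simp only [hg, if_pos h1, if_pos h2]
        rw [hcx, hcy]
        rcases min_cases (w (eMatch M p.x)) (w (eMatch M p.y)) with ⟨hm1, hle1⟩ | ⟨hm1, hle1⟩ <;>
          rcases min_cases (w (eMatch M p.y)) (w (eMatch M p.z)) with
            ⟨hm2, hle2⟩ | ⟨hm2, hle2⟩ <;>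
          rw [hm1, hm2] <;> linarith
  have hsum : ∑ p ∈ Pstar, (p.wt w - (2 / 3 : ℝ) * ∑ v ∈ p.verts, w (eMatch M v))
      ≤ ∑ p ∈ Pstar, ∑ e ∈ p.edges, g e := Finset.sum_le_sum hpath
  have hvdis : (↑Pstar : Set (P3 V)).PairwiseDisjoint P3.verts := by
    intro p hp q hq hpq
    exact hPdis p hp q hq hpq
  have huniv : Pstar.biUnion P3.verts = univ := by
    apply Finset.eq_univ_of_forall
    intro v
    obtain ⟨p, hp, hvp⟩ := hPcov v
    exact Finset.mem_biUnion.mpr ⟨p, hp, hvp⟩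
  have hverts : ∑ p ∈ Pstar, ∑ v ∈ p.verts, w (eMatch M v) = ∑ v : V, w (eMatch M v) := by
    rw [← Finset.sum_biUnion hvdis, huniv]
  have hT := sum_eMatch w hM hcov
  calc pw w Pstar - (4 / 3 : ℝ) * ew w M
      = ∑ p ∈ Pstar, (p.wt w - (2 / 3 : ℝ) * ∑ v ∈ p.verts, w (eMatch M v)) := by
        rw [Finset.sum_sub_distrib, ← Finset.mul_sum, hverts, hT, pw]; ring
    _ ≤ ∑ p ∈ Pstar, ∑ e ∈ p.edges, g e := hsum
    _ = ∑ e ∈ Esub Pstar, g e := hsplit.symm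
    _ = cw w M (Esub Pstar \ M) := hcw.symm

end MW3PP
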